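/- arXiv:1404.7092 — 2 statements merged into one kernel-verified Lean document; each statement's English description precedes it below -/
import Mathlib

section
/- For the n-headed automaton W recognizing L(U) ∩ L(V) (intersection of an n-headed automaton language with a regular language), the number of states of W can be bounded by |S_U| · |S_V|^{2n} + 1, where S_U and S_V are the state sets of U and V respectively. -/
/-- A (nondeterministic, possibly ε-transition) automaton: states `S`,
alphabet `A`, transition relation (with `none` standing for ε),
initial state, and final states. -/
structure NAuto (S A : Type*) where
  step : S → Option A → S → Prop
  start : S
  final : S → Prop

/-- `Reaches M s w s'`: the automaton can go from `s` to `s'` reading the word `w`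
(possibly using ε-transitions). -/
inductive NAuto.Reaches {S A : Type*} (M : NAuto S A) : S → List A → S → Prop
  | refl (s : S) : Reaches M s [] s
  | eps {s s' s'' : S} {w : List A} :
      M.step s none s' → Reaches M s' w s'' → Reaches M s w s''
  | cons {s s' s'' : S} {a : A} {w : List A} :
      M.step s (some a) s' → Reaches M s' w s'' → Reaches M s (a :: w) s''

/-- The language of an automaton. -/
def NAuto.lang {S A : Type*} (M : NAuto S A) : Set (List A) :=
  {w | ∃ s, M.Reaches M.start w s ∧ M.final s}

/-- The language of an `n`-headed automaton over `A`, i.e. an automaton over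
the alphabet `Fin n × A`: a word of the language is obtained from an accepted word `σ`
by concatenating, for each head index `i` in increasing order, the `A`-components of
the letters of `σ` carrying head index `i`. -/
def mhLang {S A : Type*} (n : ℕ) (M : NAuto S (Fin n × A)) : Set (List A) :=
  {w | ∃ σ s, M.Reaches M.start σ s ∧ M.final s ∧
      w = ((List.finRange n).map
            (fun i => (σ.filter (fun p => decide (p.1 = i))).map Prod.snd)).flatten}

/-!
`W` reads its input exactly as `U` does and runs `U` on it, while simulating `V` separately on
each head. Since the heads' words are concatenated in order, a run of `V` on the combined word
splits into runs on the head words whose boundary states chain up: head `i` starts where head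
`i - 1` ends. `W` therefore first guesses, in one step out of a fresh initial state, the `n`
states where the runs of `V` on the heads end; from then on a state of `W` stores a state of `U`,
these `n` guessed states and the `n` current states of `V`, and `W` accepts when `U` accepts,
every head has reached its guessed end state and the last one leads `V` to acceptance.
-/

namespace NAuto

variable {S T B : Type*} {M : NAuto S B}

theorem Reaches.append {s s' s'' : S} {w₁ w₂ : List B} (h₁ : M.Reaches s w₁ s')
    (h₂ : M.Reaches s' w₂ s'') : M.Reaches s (w₁ ++ w₂) s'' := by
  induction h₁ with
  | refl => exact h₂
  | eps hstep _ ih => exact .eps hstep (ih h₂)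
  | cons hstep _ ih => exact .cons hstep (ih h₂)

theorem reaches_append_iff {s t : S} {w₁ w₂ : List B} :
    M.Reaches s (w₁ ++ w₂) t ↔ ∃ v, M.Reaches s w₁ v ∧ M.Reaches v w₂ t := by
  refine ⟨fun h => ?_, fun ⟨_, h₁, h₂⟩ => h₁.append h₂⟩
  generalize hw : w₁ ++ w₂ = w at h
  induction h generalizing w₁ with
  | refl => obtain ⟨rfl, rfl⟩ := List.append_eq_nil_iff.mp hw; exact ⟨_, .refl _, .refl _⟩
  | eps hstep _ ih =>
    obtain ⟨v, h₁, h₂⟩ := ih hw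
    exact ⟨v, .eps hstep h₁, h₂⟩
  | cons hstep hrest ih =>
    cases w₁ with
    | nil => subst hw; exact ⟨_, .refl _, .cons hstep hrest⟩
    | cons b w₁ =>
      simp only [List.cons_append, List.cons.injEq] at hw
      obtain ⟨rfl, hw⟩ := hw
      obtain ⟨v, h₁, h₂⟩ := ih hw
      exact ⟨v, .cons hstep h₁, h₂⟩

/-- The trailing ε-moves are kept apart since they belong to no word when `n = 0`. -/
theorem reaches_flatten_finRange_iff {n : ℕ} {w : Fin n → List B} {s t : S} :
    M.Reaches s ((List.finRange n).map w).flatten t ↔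
      ∃ q : Fin (n + 1) → S, q 0 = s ∧
        (∀ i : Fin n, M.Reaches (q i.castSucc) (w i) (q i.succ)) ∧
        M.Reaches (q (Fin.last n)) [] t := by
  induction n generalizing s with
  | zero => exact ⟨fun h => ⟨fun _ => s, rfl, nofun, h⟩, fun ⟨q, hq, _, h⟩ => hq ▸ h⟩
  | succ n ih =>
    simp only [List.finRange_succ, List.map_cons, List.map_map, List.flatten_cons,
      reaches_append_iff, Function.comp_def, ih, Fin.forall_fin_succ]
    constructor
    · rintro ⟨v, h₀, q, rfl, hq, hlast⟩
      exact ⟨Fin.cons s q, rfl, ⟨h₀, hq⟩, hlast⟩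
    · rintro ⟨q, rfl, ⟨h₀, hq⟩, hlast⟩
      exact ⟨q 1, h₀, Fin.tail q, rfl, hq, hlast⟩

theorem Reaches.map {N : NAuto T B} (φ : S → T)
    (hφ : ∀ s a s', M.step s a s' → N.step (φ s) a (φ s')) {s s' : S} {w : List B}
    (h : M.Reaches s w s') : N.Reaches (φ s) w (φ s') := by
  induction h with
  | refl => exact .refl _
  | eps hstep _ ih => exact .eps (hφ _ _ _ hstep) ih
  | cons hstep _ ih => exact .cons (hφ _ _ _ hstep) ih

def relabel (e : S ≃ T) (M : NAuto S B) : NAuto T B where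
  step t a t' := M.step (e.symm t) a (e.symm t')
  start := e M.start
  final t := M.final (e.symm t)

theorem reaches_relabel_iff (e : S ≃ T) {t t' : T} {w : List B} :
    (M.relabel e).Reaches t w t' ↔ M.Reaches (e.symm t) w (e.symm t') := by
  refine ⟨Reaches.map e.symm fun _ _ _ h => h, fun h => ?_⟩
  simpa using h.map (N := M.relabel e) e fun _ _ _ h => by simpa [relabel] using h

end NAuto

theorem mhLang_relabel {S T A : Type*} {n : ℕ} (e : S ≃ T) (M : NAuto S (Fin n × A)) :
    mhLang n (M.relabel e) = mhLang n M := by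
  ext w
  simp only [mhLang, NAuto.reaches_relabel_iff]
  constructor
  · rintro ⟨σ, t, hrun, hfin, rfl⟩
    exact ⟨σ, e.symm t, by simpa [NAuto.relabel] using hrun, hfin, rfl⟩
  · rintro ⟨σ, s, hrun, hfin, rfl⟩
    exact ⟨σ, e s, by simpa [NAuto.relabel] using hrun,
      by simpa [NAuto.relabel] using hfin, rfl⟩

def headWord {n : ℕ} {A : Type*} (σ : List (Fin n × A)) (i : Fin n) : List A :=
  (σ.filter (fun p => decide (p.1 = i))).map Prod.snd

theorem headWord_cons {n : ℕ} {A : Type*} (i j : Fin n) (a : A) (σ : List (Fin n × A)) :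
    headWord ((i, a) :: σ) j = if i = j then a :: headWord σ j else headWord σ j := by
  by_cases h : i = j <;> simp [headWord, h]

section InterAuto

variable {SU SV A : Type*} {n : ℕ} (U : NAuto SU (Fin n × A)) (V : NAuto SV A)

abbrev boundary (f : Fin n → SV) : Fin (n + 1) → SV := Fin.cons V.start f

/-- In a state `some (u, f, g)`, `u` is the state of `U`, `f i` the guessed state where the run
of `V` on head `i` ends, and `g i` the current state of that run, which started at
`boundary V f i.castSucc`. -/
abbrev InterState (SU SV : Type*) (n : ℕ) := Option (SU × (Fin n → SV) × (Fin n → SV))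

inductive InterStep : InterState SU SV n → Option (Fin n × A) → InterState SU SV n → Prop
  | guess (f : Fin n → SV) :
      InterStep none none (some (U.start, f, fun i => boundary V f i.castSucc))
  | eps {u u' : SU} {f g : Fin n → SV} :
      U.step u none u' → InterStep (some (u, f, g)) none (some (u', f, g))
  | letter {u u' : SU} {f g : Fin n → SV} {i : Fin n} {a : A} {v : SV} :
      U.step u (some (i, a)) u' → V.Reaches (g i) [a] v →
        InterStep (some (u, f, g)) (some (i, a)) (some (u', f, Function.update g i v))

def interAuto : NAuto (InterState SU SV n) (Fin n × A) where
  step := InterStep U V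
  start := none
  final s := ∃ u f g, s = some (u, f, g) ∧ U.final u ∧ (∀ i, V.Reaches (g i) [] (f i)) ∧
    ∃ t, V.Reaches (boundary V f (Fin.last n)) [] t ∧ V.final t

variable {U V}

theorem interAuto_reaches_some {σ : List (Fin n × A)} {u : SU} {f g : Fin n → SV}
    {t : InterState SU SV n} (h : (interAuto U V).Reaches (some (u, f, g)) σ t) :
    ∃ u' g', t = some (u', f, g') ∧ U.Reaches u σ u' ∧
      ∀ i, V.Reaches (g i) (headWord σ i) (g' i) := by
  generalize hs : some (u, f, g) = s at h
  induction h generalizing u g with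
  | refl => subst hs; exact ⟨u, g, rfl, .refl _, fun _ => .refl _⟩
  | eps hstep _ ih =>
    subst hs
    cases hstep with
    | eps hU =>
      obtain ⟨u', g', rfl, hUrun, hVrun⟩ := ih rfl
      exact ⟨u', g', rfl, .eps hU hUrun, hVrun⟩
  | cons hstep _ ih =>
    subst hs
    cases hstep with
    | @letter _ _ _ _ i a v hU hV =>
      obtain ⟨u', g', rfl, hUrun, hVrun⟩ := ih rfl
      refine ⟨u', g', rfl, .cons hU hUrun, fun j => ?_⟩
      rw [headWord_cons]
      by_cases hij : i = j
      · subst hij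
        simpa using hV.append (by simpa using hVrun i)
      · simpa [hij, Function.update_of_ne (Ne.symm hij)] using hVrun j

theorem exists_interAuto_reaches {σ : List (Fin n × A)} {u u' : SU} (h : U.Reaches u σ u')
    (f g g' : Fin n → SV) (hV : ∀ i, V.Reaches (g i) (headWord σ i) (g' i)) :
    ∃ g'', (interAuto U V).Reaches (some (u, f, g)) σ (some (u', f, g'')) ∧
      ∀ i, V.Reaches (g'' i) [] (g' i) := by
  induction h generalizing g with
  | refl => exact ⟨g, .refl _, hV⟩
  | eps hU _ ih =>
    obtain ⟨g'', hrun, hend⟩ := ih g hV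
    exact ⟨g'', .eps (InterStep.eps hU) hrun, hend⟩
  | @cons _ _ _ x _ hU _ ih =>
    obtain ⟨i, a⟩ := x
    have hVi := hV i
    rw [headWord_cons, if_pos rfl, ← List.singleton_append, NAuto.reaches_append_iff] at hVi
    obtain ⟨v, hVa, hVrest⟩ := hVi
    obtain ⟨g'', hrun, hend⟩ := ih (Function.update g i v) fun j => by
      by_cases hij : i = j
      · subst hij; simpa using hVrest
      · simpa [hij, Function.update_of_ne (Ne.symm hij), headWord_cons] using hV j
    exact ⟨g'', .cons (InterStep.letter hU hVa) hrun, hend⟩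

theorem mhLang_interAuto : mhLang n (interAuto U V) = mhLang n U ∩ V.lang := by
  ext w
  constructor
  · rintro ⟨σ, t, hrun, ⟨u', f, g', rfl, hUfin, hend, tV, hlast, hVfin⟩, rfl⟩
    rcases hrun with _ | ⟨hguess, hrun⟩ | ⟨hstep, _⟩
    · cases hguess with | guess f₀ =>
      obtain ⟨u'', g'', hst, hUrun, hVrun⟩ := interAuto_reaches_some hrun
      obtain ⟨rfl, rfl, rfl⟩ : u' = u'' ∧ f = f₀ ∧ g' = g'' := by simpa using hst
      refine ⟨⟨σ, u', hUrun, hUfin, rfl⟩, tV, ?_, hVfin⟩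
      refine NAuto.reaches_flatten_finRange_iff.mpr ⟨boundary V f, rfl, fun i => ?_, hlast⟩
      simpa [headWord] using (hVrun i).append (hend i)
    · cases hstep
  · rintro ⟨⟨σ, u', hUrun, hUfin, rfl⟩, tV, hVrun, hVfin⟩
    obtain ⟨q, hq0, hqrun, hlast⟩ := NAuto.reaches_flatten_finRange_iff.mp hVrun
    have hq : boundary V (Fin.tail q) = q := by rw [boundary, ← hq0, Fin.cons_self_tail]
    obtain ⟨g', hrun, hend⟩ := exists_interAuto_reaches hUrun (Fin.tail q)
      (fun i => boundary V (Fin.tail q) i.castSucc) (Fin.tail q)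
      (fun i => by rw [hq]; exact hqrun i)
    exact ⟨σ, _, .eps (InterStep.guess _) hrun,
      ⟨u', _, g', rfl, hUfin, hend, tV, hq ▸ hlast, hVfin⟩, rfl⟩

theorem card_interState [Fintype SU] [Fintype SV] :
    Fintype.card (InterState SU SV n) = Fintype.card SU * Fintype.card SV ^ (2 * n) + 1 := by
  simp [two_mul, pow_add]

end InterAuto

/-- the n-headed automaton `W` recognizing `L(U) ∩ L(V)` can be chosen
with at most `|S_U| * |S_V| ^ (2 * n) + 1` states. -/
theorem mh_inter_regular_size {SU SV A : Type*} [Fintype SU] [Fintype SV]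
    (n : ℕ) (U : NAuto SU (Fin n × A)) (V : NAuto SV A) :
    ∃ (SW : Type) (fW : Fintype SW) (W : NAuto SW (Fin n × A)),
      mhLang n W = mhLang n U ∩ V.lang ∧
      @Fintype.card SW fW ≤ Fintype.card SU * Fintype.card SV ^ (2 * n) + 1 := by
  let e := Fintype.equivFin (InterState SU SV n)
  refine ⟨_, inferInstance, (interAuto U V).relabel e, ?_, ?_⟩
  · rw [mhLang_relabel, mhLang_interAuto]
  · rw [Fintype.card_fin, card_interState]
end

section
/- Expression evaluation is monotone along Power runs: if in a reachable state of the Power automaton the evaluation eval(t, i, e) of an expression e at instruction index i of thread t yields a value v ≠ ⊥, then after any further transition eval(t, i, e) still yields v. -/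
/-! A formalization of the (corrected) operational Power memory model of
Sarkar et al., following "Lazy TSO Reachability"-style conventions:
programs are finite families of thread automata over commands; the Power
semantics is a labeled transition system over runtime thread states and a
storage-subsystem state, with fetch / load / commit / propagate events. -/

namespace PowerModel

/-- Values and addresses come from a common domain, here `ℕ` (containing `0`). -/
abbrev Val := ℕ
/-- Register names. -/
abbrev Reg := ℕ

/-- Expressions over constants, registers and (binary) functions on the domain;
functions return `⊥` iff some argument is `⊥`, which is realized by `Option`-strictness
in the evaluator. -/
inductive Expr : Type
  | const : Val → Expr
  | reg : Reg → Expr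
  | fn : (Val → Val → Val) → Expr → Expr → Expr

/-- Commands: loads, stores, local assignments and conditionals. -/
inductive Cmd : Type
  | load : Reg → Expr → Cmd
  | store : Expr → Expr → Cmd
  | assign : Reg → Expr → Cmd
  | assume_ : Expr → Cmd

def Cmd.isLoad : Cmd → Prop
  | .load _ _ => True
  | _ => False

def Cmd.isStore : Cmd → Prop
  | .store _ _ => True
  | _ => False

def Cmd.isMem : Cmd → Prop
  | .load _ _ => True
  | .store _ _ => True
  | _ => False

/-- An instruction of a thread automaton: source control state, command,
destination control state. -/
structure Instr where
  src : ℕ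
  cmd : Cmd
  dst : ℕ

/-- A thread is an automaton over commands: an initial control state and a set of
instructions (all control states are final). -/
structure Thread where
  start : ℕ
  instrs : Set Instr

/-- A program with `n` threads. -/
abbrev Program (n : ℕ) := Fin n → Thread

/-- Identifier of a store: either the initial store to an address, or the `i`-th
fetched instruction of thread `t`. -/
inductive StoreId (n : ℕ) : Type
  | init : Val → StoreId n
  | st : Fin n → ℕ → StoreId n

/-- Runtime state of a thread: the sequence of fetched instructions, the set of
indices of committed instructions, and for every satisfied load its source store
together with the value read. -/
structure TState (n : ℕ) where
  fetched : List Instr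
  committed : Set ℕ
  loaded : ℕ → Option (StoreId n × Val)

/-- Does the command write to register `r`? -/
def Cmd.writesTo : Cmd → Reg → Bool
  | .load r _, r' => r == r'
  | .assign r _, r' => r == r'
  | _, _ => false

/-- Index of the last instruction before position `i` writing to register `r`. -/
def lastWrite (f : List Instr) (i : ℕ) (r : Reg) : Option ℕ :=
  (List.range i).reverse.find? (fun j =>
    match f[j]? with
    | some ins => ins.cmd.writesTo r
    | none => false)

/-- Evaluate an expression given a (partial) register valuation; strict in `⊥`. -/
def evalWith (ρ : Reg → Option Val) : Expr → Option Val
  | .const v => some v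
  | .reg r => ρ r
  | .fn g e₁ e₂ => (evalWith ρ e₁).bind fun a => (evalWith ρ e₂).map fun b => g a b

/-- Value of register `r` right before the `i`-th fetched instruction
(`fuel`-bounded recursion; the chain of defining instructions strictly decreases,
so `fuel = i + 1` computes the true value). `none` is `⊥`. -/
def regV {n : ℕ} (f : List Instr) (ld : ℕ → Option (StoreId n × Val)) :
    ℕ → ℕ → Reg → Option Val
  | 0, _, _ => none
  | fuel + 1, i, r =>
    match lastWrite f i r with
    | none => some 0
    | some i' =>
      match f[i']? with
      | some ins =>
        match ins.cmd with
        | .assign _ e => evalWith (fun r' => regV f ld fuel i' r') e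
        | .load _ _ => (ld i').map Prod.snd
        | _ => none
      | none => none

/-- Evaluation of expression `e` at the `i`-th fetched instruction of a thread. -/
def evalE {n : ℕ} (f : List Instr) (ld : ℕ → Option (StoreId n × Val))
    (i : ℕ) (e : Expr) : Option Val :=
  evalWith (fun r => regV f ld (i + 1) i r) e

namespace TState

variable {n : ℕ}

def eval (ts : TState n) (i : ℕ) (e : Expr) : Option Val :=
  evalE ts.fetched ts.loaded i e

def cmdAt (ts : TState n) (i : ℕ) : Option Cmd :=
  (ts.fetched[i]?).map Instr.cmd

/-- Address argument of the `i`-th fetched instruction (`none` = `⊥` or `⊤`). -/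
def getaddr (ts : TState n) (i : ℕ) : Option Val :=
  match ts.cmdAt i with
  | some (.load _ ea) => ts.eval i ea
  | some (.store ea _) => ts.eval i ea
  | _ => none

/-- Value argument of the `i`-th fetched instruction (`none` = `⊥` or `⊤`). -/
def getvalue (ts : TState n) (i : ℕ) : Option Val :=
  match ts.cmdAt i with
  | some (.store _ ev) => ts.eval i ev
  | some (.assign _ ev) => ts.eval i ev
  | some (.assume_ ev) => ts.eval i ev
  | _ => none

end TState

/-- Dependencies of an expression via a register-dependency oracle. -/
def exprDepsWith (ρ : Reg → Set ℕ) : Expr → Set ℕ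
  | .const _ => ∅
  | .reg r => ρ r
  | .fn _ e₁ e₂ => exprDepsWith ρ e₁ ∪ exprDepsWith ρ e₂

/-- Indices of the instructions on which the value of register `r` before position `i`
depends (loads and, transitively through assignments, their dependencies). -/
def regDeps (f : List Instr) : ℕ → ℕ → Reg → Set ℕ
  | 0, _, _ => ∅
  | fuel + 1, i, r =>
    match lastWrite f i r with
    | none => ∅
    | some i' =>
      {i'} ∪
        (match f[i']? with
         | some ins =>
           match ins.cmd with
           | .assign _ e => exprDepsWith (fun r' => regDeps f fuel i' r') e
           | _ => ∅
         | none => ∅)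

def exprDeps (f : List Instr) (i : ℕ) (e : Expr) : Set ℕ :=
  exprDepsWith (fun r => regDeps f (i + 1) i r) e

namespace TState

variable {n : ℕ}

/-- Address dependencies of the `i`-th fetched instruction. -/
def addrDeps (ts : TState n) (i : ℕ) : Set ℕ :=
  match ts.cmdAt i with
  | some (.load _ ea) => exprDeps ts.fetched i ea
  | some (.store ea _) => exprDeps ts.fetched i ea
  | _ => ∅

/-- Data dependencies of the `i`-th fetched instruction. -/
def dataDeps (ts : TState n) (i : ℕ) : Set ℕ :=
  match ts.cmdAt i with
  | some (.store _ ev) => exprDeps ts.fetched i ev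
  | some (.assign _ ev) => exprDeps ts.fetched i ev
  | some (.assume_ ev) => exprDeps ts.fetched i ev
  | _ => ∅

/-- Control dependencies: all earlier fetched conditionals. -/
def ctrlDeps (ts : TState n) (i : ℕ) : Set ℕ :=
  {i' | i' < i ∧ ∃ e, ts.cmdAt i' = some (.assume_ e)}

end TState

/-- State of the storage subsystem: coherence keys of committed stores, and for each
thread and address the last store propagated to that thread. -/
structure SState (n : ℕ) where
  coh : Fin n → ℕ → Option ℚ
  propTo : Fin n → Val → StoreId n

/-- Coherence key of a store (initial stores have key `0`). -/
def SState.keyOf {n : ℕ} (ss : SState n) : StoreId n → ℚ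
  | .init _ => 0
  | .st t i => (ss.coh t i).getD 0

/-- A state of the Power automaton. -/
structure PState (n : ℕ) where
  rt : Fin n → TState n
  ss : SState n

/-- Value written by a store, computed in the thread that issued it
(initial stores write `0`). -/
def storeVal {n : ℕ} (s : PState n) : StoreId n → Option Val
  | .init _ => some 0
  | .st t i => (s.rt t).getvalue i

/-- Events of the Power semantics. -/
inductive Event (n : ℕ) : Type
  | fetch : Fin n → ℕ → Instr → Event n
  | load : Fin n → ℕ → Val → Event n
  | commit : Fin n → ℕ → Event n
  | commitStore : Fin n → ℕ → ℚ → Val → Event n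
  | prop : Fin n → Fin n → ℕ → Val → Event n

/-- The instruction (thread id, fetch index) an event belongs to. -/
def Event.instrOf {n : ℕ} : Event n → Fin n × ℕ
  | .fetch t i _ => (t, i)
  | .load t i _ => (t, i)
  | .commit t i => (t, i)
  | .commitStore t i _ _ => (t, i)
  | .prop _ t' i _ => (t', i)

/-- Common preconditions for committing the `i`-th fetched instruction of thread `t`:
it is fetched, not yet committed, all its address, data and control dependencies are
committed, and (for memory accesses) all earlier fetched accesses to the same or to a
still-unknown address are committed. -/
def canCommit {n : ℕ} (s : PState n) (t : Fin n) (i : ℕ) : Prop :=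
  i < (s.rt t).fetched.length ∧ i ∉ (s.rt t).committed ∧
  ((s.rt t).addrDeps i ∪ (s.rt t).dataDeps i ∪ (s.rt t).ctrlDeps i) ⊆ (s.rt t).committed ∧
  (∀ a, (s.rt t).getaddr i = some a →
    ∀ i' < i, (∃ c, (s.rt t).cmdAt i' = some c ∧ c.isMem) →
      ((s.rt t).getaddr i' = none ∨ (s.rt t).getaddr i' = some a) →
      i' ∈ (s.rt t).committed)

/-- The transition relation of the Power automaton of a program. -/
inductive Step {n : ℕ} (P : Program n) : PState n → Event n → PState n → Prop
  /-- POW-FETCH -/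
  | fetch {s : PState n} {t : Fin n} {ins : Instr} :
      ins ∈ (P t).instrs →
      ins.src = (match (s.rt t).fetched.getLast? with
                 | some lst => lst.dst
                 | none => (P t).start) →
      Step P s (.fetch t (s.rt t).fetched.length ins)
        { s with rt := (Function.update s.rt t
            { s.rt t with fetched := (s.rt t).fetched ++ [ins] }) }
  /-- POW-LOAD: read from the last store propagated to the thread. -/
  | loadMem {s : PState n} {t : Fin n} {i : ℕ} {a v : Val} {w : StoreId n} :
      (∃ r ea, (s.rt t).cmdAt i = some (.load r ea)) →
      (s.rt t).loaded i = none →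
      (s.rt t).getaddr i = some a →
      w = s.ss.propTo t a →
      storeVal s w = some v →
      Step P s (.load t i a)
        { s with rt := (Function.update s.rt t
            { s.rt t with loaded := Function.update (s.rt t).loaded i (some (w, v)) }) }
  /-- POW-EARLY: forward the value of the latest uncommitted program-order-earlier
  store to the same address. -/
  | loadEarly {s : PState n} {t : Fin n} {i i' : ℕ} {a v : Val} :
      (∃ r ea, (s.rt t).cmdAt i = some (.load r ea)) →
      (s.rt t).loaded i = none →
      (s.rt t).getaddr i = some a →
      i' < i →
      (∃ ea ev, (s.rt t).cmdAt i' = some (.store ea ev)) →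
      (s.rt t).getaddr i' = some a →
      (∀ j, i' < j → j < i → (∃ ea ev, (s.rt t).cmdAt j = some (.store ea ev)) →
        ¬((s.rt t).getaddr j = none ∨ (s.rt t).getaddr j = some a)) →
      (s.rt t).getvalue i' = some v →
      i' ∉ (s.rt t).committed →
      Step P s (.load t i a)
        { s with rt := (Function.update s.rt t
            { s.rt t with loaded := Function.update (s.rt t).loaded i (some (.st t i', v)) }) }
  /-- POW-COMMIT (non-store instructions). -/
  | commitSimple {s : PState n} {t : Fin n} {i : ℕ} :
      canCommit s t i →
      (∀ c, (s.rt t).cmdAt i = some c → ¬ c.isStore) →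
      (∀ r ea, (s.rt t).cmdAt i = some (.load r ea) →
        (s.rt t).loaded i ≠ none ∧ ∃ a, (s.rt t).getaddr i = some a) →
      (∀ r ev, (s.rt t).cmdAt i = some (.assign r ev) → ∃ v, (s.rt t).getvalue i = some v) →
      (∀ ev, (s.rt t).cmdAt i = some (.assume_ ev) →
        ∃ v, (s.rt t).getvalue i = some v ∧ v ≠ 0) →
      Step P s (.commit t i)
        { s with rt := (Function.update s.rt t
            { s.rt t with committed := insert i (s.rt t).committed }) }
  /-- POW-STORE: commit a store, assigning it a fresh coherence key. -/
  | commitStore {s : PState n} {t : Fin n} {i : ℕ} {k : ℚ} {a v : Val} :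
      canCommit s t i →
      (∃ ea ev, (s.rt t).cmdAt i = some (.store ea ev)) →
      (s.rt t).getaddr i = some a →
      (s.rt t).getvalue i = some v →
      (∀ t' i', s.ss.coh t' i' ≠ some k) →
      Step P s (.commitStore t i k a)
        ⟨Function.update s.rt t { s.rt t with committed := insert i (s.rt t).committed },
         { s.ss with coh := (Function.update s.ss.coh t
             (Function.update (s.ss.coh t) i (some k))) }⟩
  /-- POW-PROP: propagate a committed store to a thread, provided it is
  coherence-order-later than the last store to this address propagated there. -/
  | propagate {s : PState n} {t t' : Fin n} {i' : ℕ} {a : Val} {k : ℚ} :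
      s.ss.coh t' i' = some k →
      (∃ ea ev, (s.rt t').cmdAt i' = some (.store ea ev)) →
      (s.rt t').getaddr i' = some a →
      s.ss.keyOf (s.ss.propTo t a) < k →
      Step P s (.prop t t' i' a)
        { s with ss := ({ s.ss with propTo := (Function.update s.ss.propTo t
            (Function.update (s.ss.propTo t) a (.st t' i'))) }) }

/-- Multi-step runs, recording the produced event sequence. -/
inductive Run {n : ℕ} (P : Program n) : PState n → List (Event n) → PState n → Prop
  | refl (s : PState n) : Run P s [] s
  | step {s s' s'' : PState n} {e : Event n} {σ : List (Event n)} :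
      Step P s e s' → Run P s' σ s'' → Run P s (e :: σ) s''

/-- The initial state of the Power automaton. -/
def initState (n : ℕ) : PState n :=
  ⟨fun _ => ⟨[], ∅, fun _ => none⟩, ⟨fun _ _ => none, fun _ a => .init a⟩⟩

/-- Final states: all fetched instructions are committed (FIN-COMM), loads of a common
address agree with the coherence order (FIN-LD), and loads agree with program-order-earlier
stores of the same thread to the same address (FIN-LD-ST). -/
def FinalState {n : ℕ} (s : PState n) : Prop :=
  ∀ t : Fin n,
    (∀ i, i < (s.rt t).fetched.length ↔ i ∈ (s.rt t).committed) ∧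
    (∀ i i' a, i' < i →
      (s.rt t).getaddr i = some a → (s.rt t).getaddr i' = some a →
      (∃ r ea, (s.rt t).cmdAt i = some (.load r ea)) →
      (∃ r ea, (s.rt t).cmdAt i' = some (.load r ea)) →
      ∀ w v w' v', (s.rt t).loaded i = some (w, v) → (s.rt t).loaded i' = some (w', v') →
        s.ss.keyOf w' ≤ s.ss.keyOf w) ∧
    (∀ i i' a, i' < i →
      (s.rt t).getaddr i = some a → (s.rt t).getaddr i' = some a →
      (∃ r ea, (s.rt t).cmdAt i = some (.load r ea)) →
      (∃ ea ev, (s.rt t).cmdAt i' = some (.store ea ev)) →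
      ∀ w v, (s.rt t).loaded i = some (w, v) →
        s.ss.keyOf (.st t i') ≤ s.ss.keyOf w)

/-- A store-commit event is immediately followed by the propagation of that store
to its own thread. -/
def ImmediateProp {n : ℕ} (σ : List (Event n)) : Prop :=
  ∀ σ₁ (t : Fin n) (i : ℕ) (k : ℚ) (a : Val) σ₂,
    σ = σ₁ ++ Event.commitStore t i k a :: σ₂ →
    ∃ σ₃, σ₂ = Event.prop t t i a :: σ₃

/-- The set of Power computations of a program. -/
def CPower {n : ℕ} (P : Program n) : Set (List (Event n)) :=
  {σ | ∃ s, Run P (initState n) σ s ∧ FinalState s ∧ ImmediateProp σ}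

end PowerModel

namespace PowerModel

/-! A Power transition changes the runtime state of a thread only by fetching further
instructions or by satisfying a load that was unsatisfied; it never removes an instruction or
changes a load source. Evaluation at position `i` only inspects the instructions before `i`
and the values of satisfied loads, and is strict in `⊥`, so a defined value persists. -/

section Evaluation

variable {n : ℕ} {f f' : List Instr} {ld ld' : ℕ → Option (StoreId n × Val)}

lemma lastWrite_lt {i i' : ℕ} {r : Reg} (h : lastWrite f i r = some i') : i' < i := by
  simpa using List.mem_of_find?_eq_some h

lemma getElem?_eq_of_prefix (hpre : f <+: f') {j : ℕ} (hj : j < f.length) : f'[j]? = f[j]? := by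
  obtain ⟨g, rfl⟩ := hpre
  exact List.getElem?_append_left hj

lemma lastWrite_eq_of_prefix (hpre : f <+: f') {i : ℕ} (hi : i ≤ f.length) (r : Reg) :
    lastWrite f' i r = lastWrite f i r := by
  refine List.find?_congr fun j hj => ?_
  rw [getElem?_eq_of_prefix hpre (by simp at hj; omega)]

lemma evalWith_mono {ρ ρ' : Reg → Option Val} (h : ∀ r v, ρ r = some v → ρ' r = some v)
    {e : Expr} {v : Val} (hv : evalWith ρ e = some v) : evalWith ρ' e = some v := by
  induction e generalizing v with
  | const c => exact hv
  | reg r => exact h r v hv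
  | fn g e₁ e₂ ih₁ ih₂ =>
    simp only [evalWith, Option.bind_eq_some_iff, Option.map_eq_some_iff] at hv ⊢
    obtain ⟨a, ha, b, hb, rfl⟩ := hv
    exact ⟨a, ih₁ ha, b, ih₂ hb, rfl⟩

lemma regV_mono (hpre : f <+: f') (hld : ∀ j p, ld j = some p → ld' j = some p)
    {fuel i : ℕ} (hi : i ≤ f.length) {r : Reg} {v : Val}
    (hv : regV f ld fuel i r = some v) : regV f' ld' fuel i r = some v := by
  induction fuel generalizing i r v with
  | zero => simp [regV] at hv
  | succ fuel ih =>
    unfold regV at hv ⊢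
    rw [lastWrite_eq_of_prefix hpre hi]
    cases hw : lastWrite f i r with
    | none => simpa [hw] using hv
    | some i' =>
      have hi' : i' < f.length := (lastWrite_lt hw).trans_le hi
      rw [hw] at hv
      dsimp only at hv ⊢
      rw [getElem?_eq_of_prefix hpre hi']
      cases hg : f[i']? with
      | none => simp [hg] at hv
      | some ins =>
        rw [hg] at hv
        dsimp only at hv ⊢
        cases hc : ins.cmd with
        | assign _ e =>
          rw [hc] at hv
          exact evalWith_mono (fun _ _ => ih hi'.le) hv
        | load _ _ =>
          rw [hc] at hv
          obtain ⟨p, hp, rfl⟩ := Option.map_eq_some_iff.mp hv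
          exact Option.map_eq_some_iff.mpr ⟨p, hld i' p hp, rfl⟩
        | store _ _ => simp [hc] at hv
        | assume_ _ => simp [hc] at hv

end Evaluation

namespace TState

variable {n : ℕ}

def Extends (ts ts' : TState n) : Prop :=
  ts.fetched <+: ts'.fetched ∧ ∀ j p, ts.loaded j = some p → ts'.loaded j = some p

lemma Extends.refl (ts : TState n) : ts.Extends ts :=
  ⟨List.prefix_refl _, fun _ _ h => h⟩

lemma Extends.update {rt : Fin n → TState n} {t₀ : Fin n} {ts : TState n}
    (h : (rt t₀).Extends ts) (t : Fin n) : (rt t).Extends (Function.update rt t₀ ts t) := by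
  rcases eq_or_ne t t₀ with rfl | ht
  · rwa [Function.update_self]
  · rw [Function.update_of_ne ht]
    exact .refl _

lemma Extends.eval_eq {ts ts' : TState n} (hext : ts.Extends ts') {i : ℕ}
    (hi : i ≤ ts.fetched.length) {e : Expr} {v : Val} (h : ts.eval i e = some v) :
    ts'.eval i e = some v :=
  evalWith_mono (fun _ _ => regV_mono hext.1 hext.2 hi) h

end TState

lemma update_eq_some_of_eq_none {α β : Type*} [DecidableEq α] {g : α → Option β} {i j : α}
    (hi : g i = none) (b : β) {p : β} (hj : g j = some p) :
    Function.update g i (some b) j = some p := by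
  rcases eq_or_ne j i with rfl | hne
  · simp [hi] at hj
  · rwa [Function.update_of_ne hne]

lemma Step.rt_extends {n : ℕ} {P : Program n} {s s' : PState n} {ev : Event n}
    (hstep : Step P s ev s') (t : Fin n) : (s.rt t).Extends (s'.rt t) := by
  cases hstep with
  | propagate => exact .refl _
  | fetch =>
    refine .update ?_ t
    exact ⟨List.prefix_append _ _, fun _ _ h => h⟩
  | loadMem _ hnone | loadEarly _ hnone =>
    refine .update ?_ t
    exact ⟨List.prefix_refl _, fun _ _ => update_eq_some_of_eq_none hnone _⟩
  | commitSimple | commitStore =>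
    refine .update ?_ t
    exact ⟨List.prefix_refl _, fun _ _ h => h⟩

theorem eval_stable_general {n : ℕ} (P : Program n) (s : PState n)
    (t : Fin n) (i : ℕ) (e : Expr) (v : Val)
    (hi : i < (s.rt t).fetched.length)
    (h : (s.rt t).eval i e = some v)
    (e' : Event n) (s' : PState n) (hstep : Step P s e' s') :
    (s'.rt t).eval i e = some v :=
  (hstep.rt_extends t).eval_eq hi.le h

/-- expression evaluation is monotone along Power runs: if in a reachable
state the evaluation of expression `e` at the `i`-th fetched instruction of thread `t`
yields a value `v` (≠ ⊥), then after any further transition it still yields `v`. -/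
theorem eval_stable {n : ℕ} (P : Program n) (σ : List (Event n)) (s : PState n)
    (hreach : Run P (initState n) σ s)
    (t : Fin n) (i : ℕ) (e : Expr) (v : Val)
    (hi : i < (s.rt t).fetched.length)
    (h : (s.rt t).eval i e = some v)
    (e' : Event n) (s' : PState n) (hstep : Step P s e' s') :
    (s'.rt t).eval i e = some v :=
  eval_stable_general P s t i e v hi h e' s' hstep

end PowerModel
end
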